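/- arXiv:0904.2514 — 3 statements merged into one kernel-verified Lean document; each statement's English description precedes it below -/
import Mathlib

section
/- For c > 0, c ≠ 1, and real x ≠ y, the limiting kernel admits the real form: (1/(h(0)·πi))·(log c/(c²−1))·[G(1+λ; 2πix)·G(λ; 2πiy) − G(1+λ; 2πiy)·G(λ; 2πix)]/(x−y) = (2/(π(x−y)·h(0)))·(log c/(c²−1))·Im( G(1+λ; 2πix)·G(λ; 2πiy) ). -/
open Filter Set

/-- `G(a;ζ) = e^{-ζ/2} ∑_{k≥0} ((a)_k/(k!)²) ζ^k`, where `(a)_k` is the Pochhammer symbol. -/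
noncomputable def Gfun (a ζ : ℂ) : ℂ :=
  Complex.exp (-ζ / 2) *
    ∑' k : ℕ, ((ascPochhammer ℂ k).eval a / ((Nat.factorial k : ℂ)) ^ 2) * ζ ^ k

/-- `λ = i·log(c)/π`. -/
noncomputable def lamC (c : ℝ) : ℂ := Complex.I * ((Real.log c / Real.pi : ℝ) : ℂ)

/-!
Multiplying the series of `G(a;ζ)` by `e^{-ζ} = ∑ (-ζ)^j / j!`, the Chu–Vandermonde identity
`∑_k (-1)^k C(n,k)² (n-k)! (a)_k = (1-a)_n` identifies the Cauchy product with the series of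
`G(1-a;-ζ)`: this is Kummer's transformation `G(a;ζ) = G(1-a;-ζ)`. The series has real
coefficients, so `conj G(a;ζ) = G(conj a; conj ζ)`. As `λ` and `2πix` are purely imaginary,
Kummer turns `conj G(1+λ;2πix)` into `G(λ;2πix)` and `conj G(λ;2πiy)` into `G(1+λ;2πiy)`. Hence
the bracket is `P - conj P = 2i Im P` with `P = G(1+λ;2πix) G(λ;2πiy)`.
-/

open Finset ComplexConjugate
open scoped Nat

theorem Nat.sum_descFactorial_mul_choose_sq_mul_factorial (m n : ℕ) :
    ∑ k ∈ range (n + 1), m.descFactorial k * n.choose k ^ 2 * (n - k)!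
      = n ! * (m + n).choose n := by
  have hterm : ∀ k ∈ range (n + 1), m.descFactorial k * n.choose k ^ 2 * (n - k)!
      = n ! * (m.choose k * n.choose (n - k)) := by
    intro k hk
    have hkn : k ≤ n := Nat.lt_succ_iff.mp (mem_range.mp hk)
    rw [Nat.descFactorial_eq_factorial_mul_choose, Nat.choose_symm hkn,
      ← Nat.choose_mul_factorial_mul_factorial hkn]
    ring
  rw [sum_congr rfl hterm, ← mul_sum, Nat.add_choose_eq,
    Nat.sum_antidiagonal_eq_sum_range_succ (fun i j => m.choose i * n.choose j)]

/-- A form of the Chu–Vandermonde identity. -/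
theorem ascPochhammer_eval_one_sub {R : Type*} [CommRing R] [IsDomain R] [CharZero R]
    (n : ℕ) (a : R) :
    (ascPochhammer R n).eval (1 - a)
      = ∑ k ∈ range (n + 1),
          (-1) ^ k * (n.choose k : R) ^ 2 * ((n - k)! : R) * (ascPochhammer R k).eval a := by
  suffices hpoly : (ascPochhammer R n).comp (1 - Polynomial.X)
      = ∑ k ∈ range (n + 1),
          Polynomial.C ((-1) ^ k * (n.choose k : R) ^ 2 * ((n - k)! : R)) * ascPochhammer R k by
    simpa [Polynomial.eval_finsetSum] using congrArg (Polynomial.eval a) hpoly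
  -- both sides agree at every `a = -m`, where they count the same natural numbers
  refine Polynomial.eq_of_infinite_eval_eq _ _ <|
    Set.infinite_of_injective_forall_mem (f := fun m : ℕ => -(m : R))
      (fun i j hij => by simpa using hij) fun m => ?_
  have hterm : ∀ k ∈ range (n + 1),
      (-1) ^ k * (n.choose k : R) ^ 2 * ((n - k)! : R) * (ascPochhammer R k).eval (-(m : R))
        = ((m.descFactorial k * n.choose k ^ 2 * (n - k)! : ℕ) : R) := by
    intro k _
    rw [ascPochhammer_eval_neg_eq_descPochhammer, descPochhammer_eval_eq_descFactorial]
    have hsign : (-1 : R) ^ k * (-1) ^ k = 1 := by rw [← mul_pow]; norm_num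
    push_cast
    linear_combination (m.descFactorial k : R) * (n.choose k : R) ^ 2 * ((n - k)! : R) * hsign
  have hleft : (1 : R) - -(m : R) = ((m + 1 : ℕ) : R) := by push_cast; ring
  simp only [Set.mem_ofPred_eq, Polynomial.eval_finsetSum, Polynomial.eval_mul,
    Polynomial.eval_C, Polynomial.eval_comp, Polynomial.eval_sub, Polynomial.eval_one,
    Polynomial.eval_X]
  rw [sum_congr rfl hterm, ← Nat.cast_sum, Nat.sum_descFactorial_mul_choose_sq_mul_factorial,
    hleft, ← ascPochhammer_eval_cast, ascPochhammer_nat_eq_ascFactorial,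
    Nat.ascFactorial_eq_factorial_mul_choose]

noncomputable def gTerm (a ζ : ℂ) (k : ℕ) : ℂ :=
  (ascPochhammer ℂ k).eval a / (k ! : ℂ) ^ 2 * ζ ^ k

theorem Gfun_eq_exp_mul_tsum (a ζ : ℂ) : Gfun a ζ = Complex.exp (-ζ / 2) * ∑' k, gTerm a ζ k :=
  rfl

theorem gTerm_succ (a ζ : ℂ) (k : ℕ) :
    gTerm a ζ (k + 1) = gTerm a ζ k * ((a + k) * ζ / ((k : ℂ) + 1) ^ 2) := by
  have hk : (k : ℂ) + 1 ≠ 0 := by exact_mod_cast k.succ_ne_zero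
  have hfac : (k ! : ℂ) ≠ 0 := by exact_mod_cast k.factorial_ne_zero
  simp only [gTerm, ascPochhammer_succ_eval, Nat.factorial_succ]
  push_cast
  field_simp
  ring

theorem norm_gTerm_ratio_le (a ζ : ℂ) {k : ℕ} (hk : 2 * (‖a‖ + 1) * ‖ζ‖ ≤ k) :
    ‖(a + k) * ζ / ((k : ℂ) + 1) ^ 2‖ ≤ 1 / 2 := by
  have hnorm : ‖(k : ℂ) + 1‖ = k + 1 := by exact_mod_cast Complex.norm_natCast (k + 1)
  have hnum : ‖a + k‖ ≤ (‖a‖ + 1) * (k + 1) := by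
    calc ‖a + k‖ ≤ ‖a‖ + k := by simpa using norm_add_le a (k : ℂ)
      _ ≤ (‖a‖ + 1) * (k + 1) := by nlinarith [norm_nonneg a, (k.cast_nonneg : (0 : ℝ) ≤ k)]
  rw [norm_div, norm_mul, norm_pow, hnorm, div_le_iff₀ (by positivity)]
  nlinarith [mul_le_mul_of_nonneg_right hnum (norm_nonneg ζ)]

theorem summable_norm_gTerm (a ζ : ℂ) : Summable fun k => ‖gTerm a ζ k‖ := by
  refine summable_of_ratio_norm_eventually_le (r := 1 / 2) (by norm_num) ?_
  filter_upwards [eventually_ge_atTop ⌈2 * (‖a‖ + 1) * ‖ζ‖⌉₊] with k hk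
  rw [norm_norm, norm_norm, gTerm_succ, norm_mul, mul_comm (1 / 2 : ℝ)]
  exact mul_le_mul_of_nonneg_left (norm_gTerm_ratio_le a ζ (Nat.ceil_le.mp hk)) (norm_nonneg _)

theorem sum_antidiagonal_expTerm_mul_gTerm (a ζ : ℂ) (n : ℕ) :
    ∑ ij ∈ antidiagonal n, (-ζ) ^ ij.1 / (ij.1 ! : ℂ) * gTerm a ζ ij.2
      = gTerm (1 - a) (-ζ) n := by
  rw [← Finset.Nat.sum_antidiagonal_swap]
  simp only [Prod.fst_swap, Prod.snd_swap]
  rw [Finset.Nat.sum_antidiagonal_eq_sum_range_succ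
    (fun i j => (-ζ) ^ j / (j ! : ℂ) * gTerm a ζ i)]
  have hterm : ∀ k ∈ range (n + 1), (-ζ) ^ (n - k) / ((n - k)! : ℂ) * gTerm a ζ k
      = (-1) ^ k * (n.choose k : ℂ) ^ 2 * ((n - k)! : ℂ) * (ascPochhammer ℂ k).eval a
          * ((-ζ) ^ n / (n ! : ℂ) ^ 2) := by
    intro k hk
    have hkn : k ≤ n := Nat.lt_succ_iff.mp (mem_range.mp hk)
    have hfac : (n ! : ℂ) = n.choose k * k ! * (n - k)! := by
      exact_mod_cast (Nat.choose_mul_factorial_mul_factorial hkn).symm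
    have hchoose : (n.choose k : ℂ) ≠ 0 := by exact_mod_cast (Nat.choose_pos hkn).ne'
    have hk : (k ! : ℂ) ≠ 0 := by exact_mod_cast k.factorial_ne_zero
    have hnk : ((n - k)! : ℂ) ≠ 0 := by exact_mod_cast (n - k).factorial_ne_zero
    have hpow : (-ζ) ^ n = (-ζ) ^ (n - k) * (-1) ^ k * ζ ^ k := by
      rw [mul_assoc, ← mul_pow, neg_one_mul, ← pow_add, Nat.sub_add_cancel hkn]
    have hsign : (-1 : ℂ) ^ k * (-1) ^ k = 1 := by rw [← mul_pow]; norm_num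
    rw [hpow, hfac, gTerm]
    field_simp
    linear_combination -((-ζ) ^ (n - k) * (ascPochhammer ℂ k).eval a * ζ ^ k) * hsign
  rw [sum_congr rfl hterm, ← sum_mul, ← ascPochhammer_eval_one_sub, gTerm, mul_div_assoc']
  ring

theorem exp_neg_mul_tsum_gTerm (a ζ : ℂ) :
    Complex.exp (-ζ) * ∑' k, gTerm a ζ k = ∑' k, gTerm (1 - a) (-ζ) k := by
  have hexp : Summable fun k : ℕ => ‖(-ζ) ^ k / (k ! : ℂ)‖ := by
    simpa [norm_div, norm_pow] using Real.summable_pow_div_factorial ‖-ζ‖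
  rw [Complex.exp_eq_exp_ℂ, NormedSpace.exp_eq_tsum_div,
    tsum_mul_tsum_eq_tsum_sum_antidiagonal_of_summable_norm hexp (summable_norm_gTerm a ζ)]
  exact tsum_congr (sum_antidiagonal_expTerm_mul_gTerm a ζ)

theorem Gfun_one_sub_neg (a ζ : ℂ) : Gfun (1 - a) (-ζ) = Gfun a ζ := by
  rw [Gfun_eq_exp_mul_tsum, Gfun_eq_exp_mul_tsum, ← exp_neg_mul_tsum_gTerm, ← mul_assoc,
    ← Complex.exp_add]
  ring_nf

theorem conj_Gfun (a ζ : ℂ) : conj (Gfun a ζ) = Gfun (conj a) (conj ζ) := by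
  have hpoch : ∀ k, conj ((ascPochhammer ℂ k).eval a) = (ascPochhammer ℂ k).eval (conj a) := by
    intro k
    rw [← Polynomial.eval₂_at_apply, ← Polynomial.eval_map, ascPochhammer_map]
  simp only [Gfun_eq_exp_mul_tsum, map_mul, ← Complex.exp_conj, Complex.conj_tsum, gTerm,
    map_div₀, map_pow, map_neg, map_natCast, map_ofNat, hpoch]

theorem conj_Gfun_eq_Gfun_one_sub (a ζ : ℂ) : conj (Gfun a ζ) = Gfun (1 - conj a) (-conj ζ) := by
  rw [conj_Gfun, Gfun_one_sub_neg]

theorem conj_lamC (c : ℝ) : conj (lamC c) = -lamC c := by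
  simp [lamC]

theorem conj_two_pi_I_mul (t : ℝ) :
    conj (2 * (Real.pi : ℂ) * Complex.I * t) = -(2 * (Real.pi : ℂ) * Complex.I * t) := by
  simp only [map_mul, map_ofNat, Complex.conj_ofReal, Complex.conj_I]
  ring

theorem stmt9_general (c : ℝ) (h0 : ℝ) :
    ∀ x y : ℝ, x ≠ y →
      (1 / ((h0 : ℂ) * (Real.pi : ℂ) * Complex.I)) * (((Real.log c : ℝ) : ℂ) / ((c : ℂ) ^ 2 - 1)) *
        ((Gfun (1 + lamC c) (2 * (Real.pi : ℂ) * Complex.I * (x : ℂ)) *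
            Gfun (lamC c) (2 * (Real.pi : ℂ) * Complex.I * (y : ℂ)) -
          Gfun (1 + lamC c) (2 * (Real.pi : ℂ) * Complex.I * (y : ℂ)) *
            Gfun (lamC c) (2 * (Real.pi : ℂ) * Complex.I * (x : ℂ))) / ((x : ℂ) - (y : ℂ))) =
      Complex.ofReal (2 / (Real.pi * (x - y) * h0) * (Real.log c / (c ^ 2 - 1)) *
        (Gfun (1 + lamC c) (2 * (Real.pi : ℂ) * Complex.I * (x : ℂ)) *
          Gfun (lamC c) (2 * (Real.pi : ℂ) * Complex.I * (y : ℂ))).im) := by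
  intro x y _
  set P := Gfun (1 + lamC c) (2 * (Real.pi : ℂ) * Complex.I * (x : ℂ)) *
    Gfun (lamC c) (2 * (Real.pi : ℂ) * Complex.I * (y : ℂ))
  have hconj : Gfun (1 + lamC c) (2 * (Real.pi : ℂ) * Complex.I * (y : ℂ)) *
      Gfun (lamC c) (2 * (Real.pi : ℂ) * Complex.I * (x : ℂ)) = conj P := by
    rw [map_mul, conj_Gfun_eq_Gfun_one_sub, conj_Gfun_eq_Gfun_one_sub, map_add, map_one,
      conj_lamC, conj_two_pi_I_mul, conj_two_pi_I_mul, mul_comm]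
    ring_nf
  rw [hconj, Complex.sub_conj, one_div, mul_inv, Complex.inv_I]
  push_cast
  generalize (x : ℂ) - y = X
  linear_combination (-(2 * P.im) * ((h0 : ℂ) * Real.pi)⁻¹ * (Real.log c / ((c : ℂ) ^ 2 - 1)) /
    X) * Complex.I_mul_I

theorem stmt9 (c : ℝ) (hc : 0 < c) (hc1 : c ≠ 1) (h0 : ℝ) (hh0 : 0 < h0) :
    ∀ x y : ℝ, x ≠ y →
      (1 / ((h0 : ℂ) * (Real.pi : ℂ) * Complex.I)) * (((Real.log c : ℝ) : ℂ) / ((c : ℂ) ^ 2 - 1)) *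
        ((Gfun (1 + lamC c) (2 * (Real.pi : ℂ) * Complex.I * (x : ℂ)) *
            Gfun (lamC c) (2 * (Real.pi : ℂ) * Complex.I * (y : ℂ)) -
          Gfun (1 + lamC c) (2 * (Real.pi : ℂ) * Complex.I * (y : ℂ)) *
            Gfun (lamC c) (2 * (Real.pi : ℂ) * Complex.I * (x : ℂ))) / ((x : ℂ) - (y : ℂ))) =
      Complex.ofReal (2 / (Real.pi * (x - y) * h0) * (Real.log c / (c ^ 2 - 1)) *
        (Gfun (1 + lamC c) (2 * (Real.pi : ℂ) * Complex.I * (x : ℂ)) *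
          Gfun (lamC c) (2 * (Real.pi : ℂ) * Complex.I * (y : ℂ))).im) :=
  stmt9_general c h0
end

section
/- Let a ∈ ℝ∖{0}. Then for every x ∈ ℝ, ₁F₁(ia; 1; ix) ≠ 0 and ₁F₁(1+ia; 1; ix) ≠ 0. Moreover, all zeros of z ↦ ₁F₁(ia; 1; iz) lie in the lower half plane ℂ⁻ = {Im z < 0}, all zeros of z ↦ ₁F₁(1+ia; 1; iz) lie in the upper half plane ℂ⁺ = {Im z > 0}, and |₁F₁(1+ia; 1; iz)| ≤ |₁F₁(ia; 1; iz)| for all z with Im z ≥ 0, with equality if and only if z ∈ ℝ. -/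
open Filter Set

/-- The confluent hypergeometric function `₁F₁(a; 1; z) = ∑_{k≥0} ((a)_k/(k!)²) z^k`,
where `(a)_k` is the Pochhammer symbol. -/
noncomputable def oneFone (a z : ℂ) : ℂ :=
  ∑' k : ℕ, ((ascPochhammer ℂ k).eval a / ((Nat.factorial k : ℂ)) ^ 2) * z ^ k

/-!
Write `b = i a`, `F = ₁F₁(b; 1; ·)` and `G = ₁F₁(1 + b; 1; ·)`. Comparing coefficients gives the
contiguous relations `w F' = b (G - F)` and `w G' = (b + w) G - b F`. Along a ray `t ↦ t w` they
show that `|F(t w)|² - |G(t w)|²` has derivative `-2 Re w |G(t w)|²`, since `Re b = 0` kills all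
other terms; hence `|F(w)|² - |G(w)|² = -2 Re w ∫₀¹ |G(t w)|² dt`, whose sign is that of `-Re w`.
With `w = i z` this gives the comparison for `Im z ≥ 0` and pushes the zeros of `F` and `G` into
opposite open half planes. On the imaginary axis `|F| = |G|`, and
`s |F(i s)|² + 2 a (|F(i s)|² - Re (conj F(i s) G(i s))) - ∫₀ˢ |F(i t)|² dt` is a first integral
of the contiguous system, equal to `0` at `s = 0`; at a zero `i s` of `F` it would equal
`-∫₀ˢ |F(i t)|² dt ≠ 0`.
-/

open Complex
open scoped RealInnerProductSpace Nat

theorem intervalIntegral_ne_zero_of_nonneg {f : ℝ → ℝ} (hf : Continuous f) (hnn : ∀ x, 0 ≤ f x)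
    {a b : ℝ} (ha : 0 < f a) (hab : a ≠ b) : ∫ x in a..b, f x ≠ 0 := by
  rcases hab.lt_or_gt with h | h
  · exact (intervalIntegral.integral_pos h hf.continuousOn (fun x _ => hnn x)
      ⟨a, left_mem_Icc.2 h.le, ha⟩).ne'
  · rw [intervalIntegral.integral_symm, neg_ne_zero]
    exact (intervalIntegral.integral_pos h hf.continuousOn (fun x _ => hnn x)
      ⟨a, right_mem_Icc.2 h.le, ha⟩).ne'

theorem inner_ofReal_mul_right (x y : ℂ) (t : ℝ) : ⟪x, t * y⟫ = t * ⟪x, y⟫ := by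
  rw [← Complex.real_smul, real_inner_smul_right]

theorem inner_ofReal_mul_left (x y : ℂ) (t : ℝ) : ⟪t * x, y⟫ = t * ⟪x, y⟫ := by
  rw [← Complex.real_smul, real_inner_smul_left]

section PowerSeries

variable {e : ℕ → ℂ}

theorem summable_mul_pow_of_succ_mul_norm_le {M : ℝ}
    (h : ∀ k : ℕ, (k + 1) * ‖e (k + 1)‖ ≤ M * ‖e k‖) (w : ℂ) :
    Summable fun k => e k * w ^ k := by
  refine summable_of_ratio_norm_eventually_le (r := 1 / 2) (by norm_num) ?_
  filter_upwards [eventually_ge_atTop ⌈2 * M * ‖w‖⌉₊] with k hk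
  have hMw : M * ‖w‖ ≤ ((k : ℝ) + 1) / 2 := by
    have := (Nat.le_ceil (2 * M * ‖w‖)).trans (Nat.cast_le.mpr hk)
    linarith
  have hk1 : (0 : ℝ) < k + 1 := by positivity
  simp only [norm_mul, norm_pow]
  refine le_of_mul_le_mul_left ?_ hk1
  calc ((k : ℝ) + 1) * (‖e (k + 1)‖ * ‖w‖ ^ (k + 1))
      = (k + 1) * ‖e (k + 1)‖ * (‖w‖ * ‖w‖ ^ k) := by ring
    _ ≤ M * ‖e k‖ * (‖w‖ * ‖w‖ ^ k) := mul_le_mul_of_nonneg_right (h k) (by positivity)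
    _ = M * ‖w‖ * (‖e k‖ * ‖w‖ ^ k) := by ring
    _ ≤ ((k : ℝ) + 1) / 2 * (‖e k‖ * ‖w‖ ^ k) := by gcongr
    _ = ((k : ℝ) + 1) * (1 / 2 * (‖e k‖ * ‖w‖ ^ k)) := by ring

theorem summable_natCast_mul_mul_pow (he : ∀ w : ℂ, Summable fun k => e k * w ^ k) (w : ℂ) :
    Summable fun k : ℕ => k * e k * w ^ k := by
  refine .of_norm_bounded (he (2 * w)).norm fun k => ?_
  have hk : (k : ℝ) ≤ 2 ^ k := by exact_mod_cast Nat.lt_two_pow_self.le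
  simp only [norm_mul, norm_pow, Complex.norm_natCast, Complex.norm_ofNat, mul_pow]
  calc (k : ℝ) * ‖e k‖ * ‖w‖ ^ k ≤ 2 ^ k * ‖e k‖ * ‖w‖ ^ k := by gcongr
    _ = ‖e k‖ * (2 ^ k * ‖w‖ ^ k) := by ring

theorem hasDerivAt_tsum_mul_pow (he : ∀ w : ℂ, Summable fun k => e k * w ^ k) (w : ℂ) :
    HasDerivAt (fun w => ∑' k, e k * w ^ k) (∑' k : ℕ, k * e k * w ^ (k - 1)) w := by
  set R := ‖w‖ + 1
  have hR : 1 ≤ R := by simp [R]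
  refine hasDerivAt_tsum_of_isPreconnected (g := fun k y => e k * y ^ k)
    (g' := fun k y => k * e k * y ^ (k - 1)) (summable_natCast_mul_mul_pow he R).norm
    Metric.isOpen_ball (convex_ball 0 R).isPreconnected (fun k y _ => ?_) (fun k y hy => ?_)
    (Metric.mem_ball_self (by positivity)) (he 0) (by simp [R])
  · exact ((hasDerivAt_pow k y).const_mul (e k)).congr_deriv (by ring)
  · have hy : ‖y‖ ≤ R := (mem_ball_zero_iff.mp hy).le
    simp only [norm_mul, norm_pow, Complex.norm_natCast, Complex.norm_real, Real.norm_eq_abs,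
      abs_of_pos (zero_lt_one.trans_le hR)]
    gcongr
    exact (pow_le_pow_left₀ (norm_nonneg y) hy _).trans (pow_le_pow_right₀ hR (Nat.sub_le k 1))

theorem mul_tsum_natCast_mul_mul_pow_sub_one (e : ℕ → ℂ) (w : ℂ) :
    w * ∑' k : ℕ, k * e k * w ^ (k - 1) = ∑' k : ℕ, k * e k * w ^ k := by
  rw [← tsum_mul_left]
  congr 1 with (_ | k)
  · simp
  · rw [Nat.add_sub_cancel, pow_succ]; ring

theorem tsum_natCast_mul_mul_zero_pow_sub_one (e : ℕ → ℂ) :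
    ∑' k : ℕ, k * e k * (0 : ℂ) ^ (k - 1) = e 1 := by
  rw [tsum_eq_single 1 fun k hk => ?_]
  · simp
  · rcases k with _ | _ | k <;> simp_all

end PowerSeries

section OneFone

noncomputable def oneFoneCoeff (b : ℂ) (k : ℕ) : ℂ :=
  (ascPochhammer ℂ k).eval b / (k ! : ℂ) ^ 2

theorem oneFone_eq_tsum (b w : ℂ) : oneFone b w = ∑' k, oneFoneCoeff b k * w ^ k := rfl

theorem oneFoneCoeff_zero (b : ℂ) : oneFoneCoeff b 0 = 1 := by simp [oneFoneCoeff]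

theorem oneFoneCoeff_one (b : ℂ) : oneFoneCoeff b 1 = b := by simp [oneFoneCoeff]

theorem oneFoneCoeff_succ_mul (b : ℂ) (k : ℕ) :
    oneFoneCoeff b (k + 1) * (k + 1) ^ 2 = oneFoneCoeff b k * (b + k) := by
  have hk : (k + 1 : ℂ) ≠ 0 := Nat.cast_add_one_ne_zero k
  have hk! : (k ! : ℂ) ≠ 0 := Nat.cast_ne_zero.mpr k.factorial_ne_zero
  simp only [oneFoneCoeff, ascPochhammer_succ_eval, Nat.factorial_succ, Nat.cast_mul,
    Nat.cast_succ]
  field_simp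

theorem mul_oneFoneCoeff_one_add (b : ℂ) (k : ℕ) :
    b * oneFoneCoeff (1 + b) k = oneFoneCoeff b k * (b + k) := by
  have h : b * (ascPochhammer ℂ k).eval (1 + b) = (ascPochhammer ℂ (k + 1)).eval b := by
    simp [ascPochhammer_succ_left, Polynomial.eval_comp, add_comm]
  rw [oneFoneCoeff, oneFoneCoeff, ← mul_div_assoc, h, ascPochhammer_succ_eval, div_mul_eq_mul_div]

theorem summable_oneFoneCoeff_mul_pow (b w : ℂ) :
    Summable fun k => oneFoneCoeff b k * w ^ k := by
  refine summable_mul_pow_of_succ_mul_norm_le (M := ‖b‖ + 1) (fun k => ?_) w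
  have h := congrArg norm (oneFoneCoeff_succ_mul b k)
  rw [norm_mul, norm_mul, norm_pow, ← Nat.cast_succ, Complex.norm_natCast] at h
  have hb : ‖b + k‖ ≤ ‖b‖ + k := (norm_add_le _ _).trans (by simp)
  refine le_of_mul_le_mul_left ?_ (Nat.cast_add_one_pos k)
  calc ((k : ℝ) + 1) * ((k + 1) * ‖oneFoneCoeff b (k + 1)‖)
      = ‖oneFoneCoeff b k‖ * ‖b + k‖ := by push_cast at h; linarith
    _ ≤ ‖oneFoneCoeff b k‖ * (‖b‖ + k) := by gcongr
    _ ≤ ((k : ℝ) + 1) * ((‖b‖ + 1) * ‖oneFoneCoeff b k‖) := by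
      nlinarith [norm_nonneg (oneFoneCoeff b k), norm_nonneg b,
        mul_nonneg (norm_nonneg (oneFoneCoeff b k)) (mul_nonneg (norm_nonneg b) k.cast_nonneg)]

theorem hasDerivAt_oneFone (b w : ℂ) :
    HasDerivAt (oneFone b) (∑' k : ℕ, k * oneFoneCoeff b k * w ^ (k - 1)) w :=
  hasDerivAt_tsum_mul_pow (summable_oneFoneCoeff_mul_pow b) w

theorem differentiable_oneFone (b : ℂ) : Differentiable ℂ (oneFone b) :=
  fun w => (hasDerivAt_oneFone b w).differentiableAt

theorem oneFone_zero (b : ℂ) : oneFone b 0 = 1 := by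
  rw [oneFone_eq_tsum, tsum_eq_single 0 fun k hk => by simp [hk]]
  simp [oneFoneCoeff_zero]

theorem deriv_oneFone_zero (b : ℂ) : deriv (oneFone b) 0 = b := by
  rw [(hasDerivAt_oneFone b 0).deriv, tsum_natCast_mul_mul_zero_pow_sub_one, oneFoneCoeff_one]

theorem mul_deriv_oneFone_eq_tsum (b w : ℂ) :
    w * deriv (oneFone b) w = ∑' k : ℕ, k * oneFoneCoeff b k * w ^ k := by
  rw [(hasDerivAt_oneFone b w).deriv, mul_tsum_natCast_mul_mul_pow_sub_one]

theorem mul_deriv_oneFone (b w : ℂ) :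
    w * deriv (oneFone b) w = b * (oneFone (1 + b) w - oneFone b w) := by
  rw [mul_deriv_oneFone_eq_tsum, oneFone_eq_tsum, oneFone_eq_tsum,
    ← (summable_oneFoneCoeff_mul_pow _ w).tsum_sub (summable_oneFoneCoeff_mul_pow b w),
    ← tsum_mul_left]
  congr 1 with k
  linear_combination (-w ^ k) * mul_oneFoneCoeff_one_add b k

theorem mul_deriv_oneFone_one_add (b w : ℂ) :
    w * deriv (oneFone (1 + b)) w = (b + w) * oneFone (1 + b) w - b * oneFone b w := by
  set c := oneFoneCoeff b
  set c' := oneFoneCoeff (1 + b)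
  have hF : HasSum (fun k => c k * w ^ k) (oneFone b w) :=
    (summable_oneFoneCoeff_mul_pow b w).hasSum
  have hG : HasSum (fun k => c' k * w ^ k) (oneFone (1 + b) w) :=
    (summable_oneFoneCoeff_mul_pow (1 + b) w).hasSum
  have hcoeff (k : ℕ) : (k + 1 - b) * c' (k + 1) + b * c (k + 1) = c' k := by
    have hk : ((k : ℂ) + 1) ^ 2 ≠ 0 := pow_ne_zero 2 (Nat.cast_add_one_ne_zero k)
    refine mul_left_cancel₀ hk ?_
    linear_combination (k + 1 - b) * oneFoneCoeff_succ_mul (1 + b) k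
      + b * oneFoneCoeff_succ_mul b k - b * mul_oneFoneCoeff_one_add b k
  set T : ℕ → ℂ := fun k => (k - b) * c' k * w ^ k + b * c k * w ^ k
  -- `T` is the series of `w * oneFone (1 + b) w`, shifted by one index
  have hT : HasSum T (w * oneFone (1 + b) w) := by
    rw [← hasSum_nat_add_iff' 1]
    have hT0 : T 0 = 0 := by simp [T, c, c', oneFoneCoeff_zero]
    have hT_succ (k : ℕ) : T (k + 1) = w * (c' k * w ^ k) := by
      simp only [T]; push_cast
      linear_combination w ^ (k + 1) * hcoeff k + c' k * (pow_succ' w k)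
    simpa [hT0, hT_succ] using hG.mul_left w
  calc w * deriv (oneFone (1 + b)) w = ∑' k, (T k + b * (c' k * w ^ k) - b * (c k * w ^ k)) := by
        rw [mul_deriv_oneFone_eq_tsum]; congr 1 with k; ring
    _ = (b + w) * oneFone (1 + b) w - b * oneFone b w := by
        rw [((hT.add (hG.mul_left b)).sub (hF.mul_left b)).tsum_eq]; ring

theorem hasDerivAt_oneFone_ofReal_mul (b w : ℂ) (t : ℝ) :
    HasDerivAt (fun s : ℝ => oneFone b (s * w)) (w * deriv (oneFone b) (t * w)) t := by
  have h : HasDerivAt (fun x : ℂ => oneFone b (x * w)) (deriv (oneFone b) (t * w) * w) t :=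
    HasDerivAt.comp (h₂ := oneFone b) (t : ℂ) (differentiable_oneFone b _).hasDerivAt
      (hasDerivAt_mul_const w)
  exact h.comp_ofReal.congr_deriv (mul_comm _ _)

theorem continuous_norm_sq_oneFone_ofReal_mul (b w : ℂ) :
    Continuous fun t : ℝ => ‖oneFone b (t * w)‖ ^ 2 :=
  ((differentiable_oneFone b).continuous.comp (continuous_ofReal.mul continuous_const)).norm.pow 2

theorem integral_norm_sq_oneFone_pos (b w : ℂ) :
    0 < ∫ t in (0 : ℝ)..1, ‖oneFone b (t * w)‖ ^ 2 :=
  intervalIntegral.integral_pos one_pos (continuous_norm_sq_oneFone_ofReal_mul b w).continuousOn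
    (fun _ _ => by positivity) ⟨0, by simp, by simp [oneFone_zero]⟩

end OneFone

section ImaginaryParameter

variable {b : ℂ}

theorem inner_sub_inner_eq_neg_re_mul_norm_sq (hb : b.re = 0) (u v ζ : ℂ) :
    ⟪u, b * (v - u)⟫ - ⟪v, (b + ζ) * v - b * u⟫ = -ζ.re * ‖v‖ ^ 2 := by
  simp only [Complex.inner, mul_re, mul_im, sub_re, sub_im, add_re, add_im, conj_re, conj_im, hb,
    Complex.sq_norm, normSq_apply]
  ring

theorem hasDerivAt_norm_sq_oneFone_sub (hb : b.re = 0) (w : ℂ) (t : ℝ) :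
    HasDerivAt (fun s : ℝ => ‖oneFone b (s * w)‖ ^ 2 - ‖oneFone (1 + b) (s * w)‖ ^ 2)
      (-2 * w.re * ‖oneFone (1 + b) (t * w)‖ ^ 2) t := by
  refine ((hasDerivAt_oneFone_ofReal_mul b w t).norm_sq.sub
    (hasDerivAt_oneFone_ofReal_mul (1 + b) w t).norm_sq).congr_deriv ?_
  rcases eq_or_ne t 0 with rfl | ht
  · simp [oneFone_zero, deriv_oneFone_zero, Complex.inner, hb]
    ring
  · refine mul_left_cancel₀ ht ?_
    have key := inner_sub_inner_eq_neg_re_mul_norm_sq hb (oneFone b (t * w))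
      (oneFone (1 + b) (t * w)) (t * w)
    rw [← mul_deriv_oneFone, ← mul_deriv_oneFone_one_add, mul_assoc, mul_assoc,
      inner_ofReal_mul_right, inner_ofReal_mul_right, re_ofReal_mul] at key
    linear_combination 2 * key

theorem norm_sq_oneFone_sub_norm_sq_oneFone_one_add (hb : b.re = 0) (w : ℂ) :
    ‖oneFone b w‖ ^ 2 - ‖oneFone (1 + b) w‖ ^ 2
      = -2 * w.re * ∫ t in (0 : ℝ)..1, ‖oneFone (1 + b) (t * w)‖ ^ 2 := by
  rw [← intervalIntegral.integral_const_mul, intervalIntegral.integral_eq_sub_of_hasDerivAt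
    (fun t _ => hasDerivAt_norm_sq_oneFone_sub hb w t)
    ((continuous_const.mul (continuous_norm_sq_oneFone_ofReal_mul _ w)).intervalIntegrable 0 1)]
  simp [oneFone_zero]

noncomputable def imagAxisFirstIntegral (b : ℂ) (s : ℝ) : ℝ :=
  s * ‖oneFone b (s * I)‖ ^ 2
    + 2 * b.im * (‖oneFone b (s * I)‖ ^ 2 - ⟪oneFone b (s * I), oneFone (1 + b) (s * I)⟫)
    - ∫ t in (0 : ℝ)..s, ‖oneFone b (t * I)‖ ^ 2

theorem imagAxisFirstIntegral_deriv_identity (hb : b.re = 0) (s : ℝ) (u v : ℂ) :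
    2 * s * ⟪u, b * (v - u)⟫ + 2 * b.im * (2 * ⟪u, b * (v - u)⟫
      - ⟪u, (b + s * I) * v - b * u⟫ - ⟪b * (v - u), v⟫) = 0 := by
  simp only [Complex.inner, mul_re, mul_im, sub_re, sub_im, add_re, add_im, conj_re, conj_im, hb,
    ofReal_re, ofReal_im, I_re, I_im]
  ring

theorem hasDerivAt_imagAxisFirstIntegral (hb : b.re = 0) (s : ℝ) :
    HasDerivAt (imagAxisFirstIntegral b) 0 s := by
  have hu := hasDerivAt_oneFone_ofReal_mul b I s
  have hv := hasDerivAt_oneFone_ofReal_mul (1 + b) I s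
  have hint :=
    ((continuous_norm_sq_oneFone_ofReal_mul b I).integral_hasStrictDerivAt 0 s).hasDerivAt
  refine ((((hasDerivAt_id' s).mul hu.norm_sq).add
    ((hu.norm_sq.sub (hu.inner ℝ hv)).const_mul (2 * b.im))).sub hint).congr_deriv ?_
  rcases eq_or_ne s 0 with rfl | hs
  · simp [oneFone_zero, deriv_oneFone_zero, Complex.inner]
    right; ring
  · refine mul_left_cancel₀ hs ?_
    have key := imagAxisFirstIntegral_deriv_identity hb s (oneFone b (s * I))
      (oneFone (1 + b) (s * I))
    rw [← mul_deriv_oneFone, ← mul_deriv_oneFone_one_add] at key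
    simp only [mul_assoc, inner_ofReal_mul_right, inner_ofReal_mul_left] at key
    linear_combination key

theorem imagAxisFirstIntegral_eq_zero (hb : b.re = 0) (s : ℝ) : imagAxisFirstIntegral b s = 0 := by
  rw [is_const_of_deriv_eq_zero (fun x => (hasDerivAt_imagAxisFirstIntegral hb x).differentiableAt)
    (fun x => (hasDerivAt_imagAxisFirstIntegral hb x).deriv) s 0]
  simp [imagAxisFirstIntegral, oneFone_zero]

theorem oneFone_ne_zero_of_re_eq_zero (hb : b.re = 0) {w : ℂ} (hw : w.re = 0) :
    oneFone b w ≠ 0 := by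
  have hw' : w = w.im * I := by apply Complex.ext <;> simp [hw]
  rcases eq_or_ne w.im 0 with him | him
  · rw [hw', him]; simp [oneFone_zero]
  · intro hF
    have h := imagAxisFirstIntegral_eq_zero hb w.im
    rw [imagAxisFirstIntegral, ← hw', hF] at h
    refine intervalIntegral_ne_zero_of_nonneg (continuous_norm_sq_oneFone_ofReal_mul b I)
      (fun _ => by positivity) (by simp [oneFone_zero]) him.symm ?_
    simpa using h

theorem norm_oneFone_one_add_lt (hb : b.re = 0) {w : ℂ} (hw : w.re < 0) :
    ‖oneFone (1 + b) w‖ < ‖oneFone b w‖ := by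
  have h := norm_sq_oneFone_sub_norm_sq_oneFone_one_add hb w
  have hpos := integral_norm_sq_oneFone_pos (1 + b) w
  exact (sq_lt_sq₀ (norm_nonneg _) (norm_nonneg _)).mp (by nlinarith)

theorem norm_oneFone_lt (hb : b.re = 0) {w : ℂ} (hw : 0 < w.re) :
    ‖oneFone b w‖ < ‖oneFone (1 + b) w‖ := by
  have h := norm_sq_oneFone_sub_norm_sq_oneFone_one_add hb w
  have hpos := integral_norm_sq_oneFone_pos (1 + b) w
  exact (sq_lt_sq₀ (norm_nonneg _) (norm_nonneg _)).mp (by nlinarith)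

theorem norm_oneFone_one_add_eq (hb : b.re = 0) {w : ℂ} (hw : w.re = 0) :
    ‖oneFone (1 + b) w‖ = ‖oneFone b w‖ := by
  have h := norm_sq_oneFone_sub_norm_sq_oneFone_one_add hb w
  rw [hw] at h
  exact (pow_left_inj₀ (norm_nonneg _) (norm_nonneg _) two_ne_zero).mp (by linarith)

theorem oneFone_one_add_ne_zero_of_re_eq_zero (hb : b.re = 0) {w : ℂ} (hw : w.re = 0) :
    oneFone (1 + b) w ≠ 0 := by
  rw [← norm_ne_zero_iff, norm_oneFone_one_add_eq hb hw, norm_ne_zero_iff]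
  exact oneFone_ne_zero_of_re_eq_zero hb hw

theorem re_pos_of_oneFone_eq_zero (hb : b.re = 0) {w : ℂ} (hF : oneFone b w = 0) : 0 < w.re := by
  rcases lt_trichotomy w.re 0 with hw | hw | hw
  · exact absurd (norm_oneFone_one_add_lt hb hw) (by simp [hF])
  · exact absurd hF (oneFone_ne_zero_of_re_eq_zero hb hw)
  · exact hw

theorem re_neg_of_oneFone_one_add_eq_zero (hb : b.re = 0) {w : ℂ} (hG : oneFone (1 + b) w = 0) :
    w.re < 0 := by
  rcases lt_trichotomy w.re 0 with hw | hw | hw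
  · exact hw
  · exact absurd hG (oneFone_one_add_ne_zero_of_re_eq_zero hb hw)
  · exact absurd (norm_oneFone_lt hb hw) (by simp [hG])

end ImaginaryParameter

theorem stmt12_general (a : ℝ) :
    (∀ x : ℝ, oneFone (Complex.I * a) (Complex.I * x) ≠ 0 ∧
        oneFone (1 + Complex.I * a) (Complex.I * x) ≠ 0) ∧
    (∀ z : ℂ, oneFone (Complex.I * a) (Complex.I * z) = 0 → z.im < 0) ∧
    (∀ z : ℂ, oneFone (1 + Complex.I * a) (Complex.I * z) = 0 → 0 < z.im) ∧
    (∀ z : ℂ, 0 ≤ z.im →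
      ‖oneFone (1 + Complex.I * a) (Complex.I * z)‖ ≤ ‖oneFone (Complex.I * a) (Complex.I * z)‖ ∧
      (‖oneFone (1 + Complex.I * a) (Complex.I * z)‖ = ‖oneFone (Complex.I * a) (Complex.I * z)‖
        ↔ z.im = 0)) := by
  have hb : (I * a).re = 0 := by simp
  refine ⟨fun x => ⟨oneFone_ne_zero_of_re_eq_zero hb (by simp),
      oneFone_one_add_ne_zero_of_re_eq_zero hb (by simp)⟩,
    fun z hz => by simpa using re_pos_of_oneFone_eq_zero hb hz,
    fun z hz => by simpa using re_neg_of_oneFone_one_add_eq_zero hb hz,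
    fun z hz => ?_⟩
  rcases hz.lt_or_eq with hz | hz
  · have hlt := norm_oneFone_one_add_lt hb (w := I * z) (by simpa using hz)
    exact ⟨hlt.le, fun h => absurd h hlt.ne, fun h => absurd h hz.ne'⟩
  · exact ⟨(norm_oneFone_one_add_eq hb (by simp [← hz])).le,
      fun _ => hz.symm, fun _ => norm_oneFone_one_add_eq hb (by simp [← hz])⟩

theorem stmt12 (a : ℝ) (ha : a ≠ 0) :
    (∀ x : ℝ, oneFone (Complex.I * a) (Complex.I * x) ≠ 0 ∧
        oneFone (1 + Complex.I * a) (Complex.I * x) ≠ 0) ∧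
    (∀ z : ℂ, oneFone (Complex.I * a) (Complex.I * z) = 0 → z.im < 0) ∧
    (∀ z : ℂ, oneFone (1 + Complex.I * a) (Complex.I * z) = 0 → 0 < z.im) ∧
    (∀ z : ℂ, 0 ≤ z.im →
      ‖oneFone (1 + Complex.I * a) (Complex.I * z)‖ ≤ ‖oneFone (Complex.I * a) (Complex.I * z)‖ ∧
      (‖oneFone (1 + Complex.I * a) (Complex.I * z)‖ = ‖oneFone (Complex.I * a) (Complex.I * z)‖
        ↔ z.im = 0)) :=
  stmt12_general a
end

section
/- For every a ∈ ℝ, the function 𝔊(x) = x − 2·arg ₁F₁(ia; 1; ix) (with the continuous determination of the argument normalized by 𝔊(0) = 0) is strictly increasing on ℝ. -/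
/-!
Along the imaginary axis, `w(x) = ₁F₁(ia; 1; ix)` is an entire power series in `x` solving
`x w'' + (1 - i x) w' + a w = 0`. Multiplying by `conj w` and taking imaginary parts gives
`(x Im(w' conj w))' = x Re(w' conj w) = x (|w|²)' / 2`, hence
`2 x Im(w' conj w) = x |w|² - ∫₀ˣ |w|²`. At a real zero of `w` this would force `∫₀ˣ |w|² = 0`,
impossible as `|w(0)| = 1`; so `w = exp (∫₀ˣ w'/w)` and, by uniqueness of continuous lifts through
`t ↦ exp (i t)`, `y = Im ∫₀ˣ w'/w`. Therefore `𝔊' = 1 - 2 Im(w'/w) = (∫₀ˣ |w|²) / (x |w|²) > 0`.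
-/

open Filter Set

open Complex

noncomputable def realPowerSeries (c : ℕ → ℂ) (x : ℝ) : ℂ := ∑' n, c n * (x : ℂ) ^ n

noncomputable def derivCoeff (c : ℕ → ℂ) (n : ℕ) : ℂ := (n + 1) * c (n + 1)

def HasInfiniteRadius (c : ℕ → ℂ) : Prop := ∀ R : ℝ, Summable fun n => ‖c n‖ * R ^ n

namespace HasInfiniteRadius

variable {c : ℕ → ℂ}

theorem summable (hc : HasInfiniteRadius c) (x : ℝ) : Summable fun n => c n * (x : ℂ) ^ n :=
  .of_norm <| by simpa [norm_mul, norm_pow] using hc |x|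

theorem derivCoeff (hc : HasInfiniteRadius c) : HasInfiniteRadius (derivCoeff c) := by
  intro R
  refine .of_norm_bounded ((summable_nat_add_iff 1).2 (hc (2 * (|R| + 1)))) fun n => ?_
  have hn : ((n : ℝ) + 1) ≤ 2 ^ (n + 1) := by exact_mod_cast (Nat.lt_two_pow_self).le
  have hR : |R| ^ n ≤ (|R| + 1) ^ (n + 1) := calc
    |R| ^ n ≤ (|R| + 1) ^ n := by gcongr; linarith
    _ ≤ (|R| + 1) ^ (n + 1) := pow_le_pow_right₀ (by linarith [abs_nonneg R]) n.le_succ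
  calc ‖‖_root_.derivCoeff c n‖ * R ^ n‖ = ‖c (n + 1)‖ * (((n : ℝ) + 1) * |R| ^ n) := by
        simp only [_root_.derivCoeff, norm_mul, norm_pow, Real.norm_eq_abs, abs_norm]
        rw [show ((n : ℂ) + 1) = ((n + 1 : ℕ) : ℂ) by push_cast; ring, Complex.norm_natCast]
        push_cast; ring
    _ ≤ ‖c (n + 1)‖ * (2 ^ (n + 1) * (|R| + 1) ^ (n + 1)) := by gcongr
    _ = ‖c (n + 1)‖ * (2 * (|R| + 1)) ^ (n + 1) := by rw [mul_pow]

theorem hasDerivAt (hc : HasInfiniteRadius c) (x : ℝ) :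
    HasDerivAt (realPowerSeries c) (realPowerSeries (_root_.derivCoeff c) x) x := by
  have hsplit : realPowerSeries c = fun y : ℝ => c 0 + ∑' n, c (n + 1) * (y : ℂ) ^ (n + 1) := by
    funext y
    rw [realPowerSeries, (hc.summable y).tsum_eq_zero_add]
    simp
  have hx : x ∈ Metric.ball (0 : ℝ) (|x| + 1) := by simp
  have htail : HasDerivAt (fun y : ℝ => ∑' n, c (n + 1) * (y : ℂ) ^ (n + 1))
      (realPowerSeries (_root_.derivCoeff c) x) x := by
    refine hasDerivAt_tsum_of_isPreconnected
      (g := fun n (y : ℝ) => c (n + 1) * (y : ℂ) ^ (n + 1))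
      (g' := fun n (y : ℝ) => _root_.derivCoeff c n * (y : ℂ) ^ n) (hc.derivCoeff (|x| + 1))
      Metric.isOpen_ball (convex_ball _ _).isPreconnected (fun n y _ => ?_) (fun n y hy => ?_)
      (Metric.mem_ball_self (by positivity))
      ((summable_nat_add_iff (f := fun n => c n * ((0 : ℝ) : ℂ) ^ n) 1).2 (hc.summable 0)) hx
    · have h := ((hasDerivAt_pow (n + 1) (y : ℂ)).const_mul (c (n + 1))).comp_ofReal (z := y)
      refine h.congr_deriv ?_
      simp only [_root_.derivCoeff, Nat.add_sub_cancel]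
      push_cast
      ring
    · rw [norm_mul, norm_pow, Complex.norm_real, Real.norm_eq_abs]
      have : |y| ≤ |x| + 1 := by simpa using (Metric.mem_ball.1 hy).le
      gcongr
  simpa [hsplit] using htail.const_add (c 0)

end HasInfiniteRadius

theorem realPowerSeries_zero (c : ℕ → ℂ) : realPowerSeries c 0 = c 0 := by
  rw [realPowerSeries, tsum_eq_single 0 fun n hn => by simp [hn]]
  simp

theorem realPowerSeries_kummer_ode {c : ℕ → ℂ} (hc : HasInfiniteRadius c) {α : ℂ}
    (hrec : ∀ n : ℕ, ((n : ℂ) + 1) ^ 2 * c (n + 1) = I * (α + n) * c n) (x : ℝ) :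
    x * realPowerSeries (derivCoeff (derivCoeff c)) x
      + (1 - I * x) * realPowerSeries (derivCoeff c) x - I * α * realPowerSeries c x = 0 := by
  set d := derivCoeff c
  have hsum : ∀ {f : ℕ → ℂ}, HasInfiniteRadius f →
      HasSum (fun n => f n * (x : ℂ) ^ n) (realPowerSeries f x) :=
    fun hf => (hf.summable x).hasSum
  have hshift : ∀ {f : ℕ → ℂ}, HasInfiniteRadius f →
      HasSum (fun n => f (n + 1) * (x : ℂ) ^ (n + 1)) (realPowerSeries f x - f 0) := by
    intro f hf
    simpa using (hasSum_nat_add_iff' 1).2 (hsum hf)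
  have hmulx : ∀ {f : ℕ → ℂ}, HasInfiniteRadius f →
      HasSum (fun n => f n * (x : ℂ) ^ (n + 1)) (x * realPowerSeries f x) := by
    intro f hf
    simpa [pow_succ, mul_comm, mul_left_comm, mul_assoc] using (hsum hf).mul_left (x : ℂ)
  have hd : HasInfiniteRadius d := hc.derivCoeff
  have h := (((hmulx hd.derivCoeff).add (hshift hd)).sub ((hmulx hd).mul_left I)).sub
    ((hshift hc).mul_left (I * α))
  have hcoeff : ∀ n : ℕ, derivCoeff d n * (x : ℂ) ^ (n + 1) + d (n + 1) * (x : ℂ) ^ (n + 1)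
      - I * (d n * (x : ℂ) ^ (n + 1)) - I * α * (c (n + 1) * (x : ℂ) ^ (n + 1)) = 0 := by
    intro n
    have := hrec (n + 1)
    simp only [d, derivCoeff] at this ⊢
    push_cast at this ⊢
    linear_combination (x : ℂ) ^ (n + 1) * this
  have h0 : d 0 = I * α * c 0 := by
    simpa [d, derivCoeff] using hrec 0
  have := h.unique (by simpa only [hcoeff] using hasSum_zero)
  linear_combination this + h0

noncomputable def kummerCoeff (α : ℂ) (k : ℕ) : ℂ :=
  (ascPochhammer ℂ k).eval α * I ^ k / (k.factorial : ℂ) ^ 2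

theorem kummerCoeff_zero (α : ℂ) : kummerCoeff α 0 = 1 := by
  simp [kummerCoeff]

theorem kummerCoeff_succ (α : ℂ) (k : ℕ) :
    ((k : ℂ) + 1) ^ 2 * kummerCoeff α (k + 1) = I * (α + k) * kummerCoeff α k := by
  have hk : (k.factorial : ℂ) ≠ 0 := by exact_mod_cast k.factorial_ne_zero
  simp only [kummerCoeff, ascPochhammer_succ_right, Polynomial.eval_mul, Polynomial.eval_add,
    Polynomial.eval_X, Polynomial.eval_natCast, Nat.factorial_succ, Nat.cast_mul, pow_succ]
  push_cast
  field_simp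

theorem hasInfiniteRadius_kummerCoeff (α : ℂ) : HasInfiniteRadius (kummerCoeff α) := by
  intro R
  obtain ⟨N, hN⟩ := exists_nat_ge (2 * (‖α‖ + 1) * |R|)
  refine summable_of_ratio_norm_eventually_le (r := 1 / 2) (by norm_num) ?_
  filter_upwards [eventually_ge_atTop N] with k hk
  simp only [norm_mul, norm_pow, Real.norm_eq_abs, abs_norm]
  have hrec := congrArg norm (kummerCoeff_succ α k)
  rw [norm_mul, norm_mul, norm_pow, norm_mul, norm_I, one_mul,
    show ‖(k : ℂ) + 1‖ = k + 1 by exact_mod_cast Complex.norm_natCast (k + 1)] at hrec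
  have hratio : ‖α + k‖ * |R| ≤ ((k : ℝ) + 1) ^ 2 / 2 := by
    have hkN : 2 * (‖α‖ + 1) * |R| ≤ k + 1 := by
      have : (N : ℝ) ≤ k := by exact_mod_cast hk
      linarith
    calc ‖α + k‖ * |R| ≤ (‖α‖ + 1) * (k + 1) * |R| := by
          gcongr
          calc ‖α + k‖ ≤ ‖α‖ + k := by simpa using norm_add_le α (k : ℂ)
            _ ≤ (‖α‖ + 1) * (k + 1) := by nlinarith [norm_nonneg α, k.cast_nonneg (α := ℝ)]
      _ ≤ ((k : ℝ) + 1) ^ 2 / 2 := by nlinarith [k.cast_nonneg (α := ℝ)]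
  refine le_of_mul_le_mul_left ?_ (by positivity : (0 : ℝ) < ((k : ℝ) + 1) ^ 2)
  calc ((k : ℝ) + 1) ^ 2 * (‖kummerCoeff α (k + 1)‖ * |R| ^ (k + 1))
      = ‖α + k‖ * |R| * (‖kummerCoeff α k‖ * |R| ^ k) := by
        rw [pow_succ]; linear_combination (|R| ^ k * |R|) * hrec
    _ ≤ ((k : ℝ) + 1) ^ 2 / 2 * (‖kummerCoeff α k‖ * |R| ^ k) := by gcongr
    _ = ((k : ℝ) + 1) ^ 2 * (1 / 2 * (‖kummerCoeff α k‖ * |R| ^ k)) := by ring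

theorem oneFone_I_mul (α : ℂ) (x : ℝ) : oneFone α (I * x) = realPowerSeries (kummerCoeff α) x := by
  refine tsum_congr fun k => ?_
  rw [kummerCoeff, mul_pow]
  ring

open ComplexConjugate

theorem HasDerivAt.complex_im {f : ℝ → ℂ} {f' : ℂ} {x : ℝ} (h : HasDerivAt f f' x) :
    HasDerivAt (fun t => (f t).im) f'.im x :=
  imCLM.hasFDerivAt.comp_hasDerivAt x h

theorem integral_pos_of_continuous_of_nonneg {f : ℝ → ℝ} (hf : Continuous f) (hnn : ∀ t, 0 ≤ f t)
    {a b c : ℝ} (hab : a < b) (hc : c ∈ Icc a b) (hfc : 0 < f c) : 0 < ∫ t in a..b, f t := by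
  rw [intervalIntegral.integral_pos_iff_support_of_nonneg_ae' (.of_forall hnn)
    (hf.intervalIntegrable a b)]
  refine ⟨hab, ?_⟩
  rw [← closure_Ioo hab.ne] at hc
  obtain ⟨t, htf, htab⟩ := mem_closure_iff.1 hc _ hf.isOpen_support hfc.ne'
  calc 0 < MeasureTheory.volume (Function.support f ∩ Ioo a b) :=
        (hf.isOpen_support.inter isOpen_Ioo).measure_pos _ ⟨t, htf, htab⟩
    _ ≤ MeasureTheory.volume (Function.support f ∩ Ioc a b) :=
        MeasureTheory.measure_mono (inter_subset_inter_right _ Ioo_subset_Ioc_self)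

theorem mul_integral_pos_of_continuous_of_nonneg {f : ℝ → ℝ} (hf : Continuous f)
    (hnn : ∀ t, 0 ≤ f t) (h0 : 0 < f 0) {x : ℝ} (hx : x ≠ 0) : 0 < x * ∫ t in 0..x, f t := by
  rcases hx.lt_or_gt with hx | hx
  · rw [intervalIntegral.integral_symm, mul_neg, ← neg_mul]
    exact mul_pos (neg_pos.2 hx)
      (integral_pos_of_continuous_of_nonneg hf hnn hx (right_mem_Icc.2 hx.le) h0)
  · exact mul_pos hx (integral_pos_of_continuous_of_nonneg hf hnn hx (left_mem_Icc.2 hx.le) h0)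

theorem eq_of_continuous_of_exp_I_mul_eq {f g : ℝ → ℝ} (hf : Continuous f) (hg : Continuous g)
    (h0 : f 0 = g 0) (h : ∀ x, exp (I * f x) = exp (I * g x)) : f = g :=
  Circle.isCoveringMap_exp.eq_of_comp_eq hf hg
    (funext fun x => Subtype.ext <| by simpa [Circle.coe_exp, mul_comm] using h x) 0 h0

theorem exp_eq_norm_mul_exp_I_mul_im (z : ℂ) : exp z = ‖exp z‖ * exp (I * z.im) := by
  rw [norm_exp, ofReal_exp, ← exp_add]
  congr 1
  apply Complex.ext <;> simp

theorem eq_mul_exp_integral_div {w w' : ℝ → ℂ} (hw : ∀ x, HasDerivAt w (w' x) x)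
    (hne : ∀ x, w x ≠ 0) (hw' : Continuous w') (x : ℝ) :
    w x = w 0 * exp (∫ t in 0..x, w' t / w t) := by
  have hcont : Continuous fun t => w' t / w t :=
    hw'.div (continuous_iff_continuousAt.2 fun t => (hw t).continuousAt) hne
  set L := fun x => ∫ t in 0..x, w' t / w t
  have hQ : ∀ t, HasDerivAt (fun t => w t * exp (-L t)) 0 t := by
    intro t
    have hL : HasDerivAt L (w' t / w t) t := (hcont.integral_hasStrictDerivAt 0 t).hasDerivAt
    refine ((hw t).mul hL.neg.cexp).congr_deriv ?_
    field_simp [hne t]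
    ring
  have hconst := is_const_of_deriv_eq_zero (fun t => (hQ t).differentiableAt)
    (fun t => (hQ t).deriv) x 0
  simp only [L, intervalIntegral.integral_same, neg_zero, exp_zero, mul_one] at hconst
  rw [← hconst, mul_assoc, ← exp_add, neg_add_cancel, exp_zero, mul_one]

section KummerPhase

variable {a : ℝ} {w w' w'' : ℝ → ℂ}

theorem two_mul_im_mul_conj_eq_sub_integral (hw : ∀ x, HasDerivAt w (w' x) x)
    (hw' : ∀ x, HasDerivAt w' (w'' x) x)
    (hode : ∀ x : ℝ, x * w'' x + (1 - I * x) * w' x + a * w x = 0) (x : ℝ) :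
    2 * x * (w' x * conj (w x)).im = x * ‖w x‖ ^ 2 - ∫ t in 0..x, ‖w t‖ ^ 2 := by
  have hcont : Continuous fun t => ‖w t‖ ^ 2 :=
    (continuous_iff_continuousAt.2 fun t => (hw t).continuousAt).norm.pow 2
  have hP : ∀ t, HasDerivAt
      (fun t => 2 * t * (w' t * conj (w t)).im - t * ‖w t‖ ^ 2 + ∫ s in 0..t, ‖w s‖ ^ 2) 0 t := by
    intro t
    have hK := ((hw' t).mul (hw t).star).complex_im
    have hN := (hw t).norm_sq
    have hJ := (hcont.integral_hasStrictDerivAt 0 t).hasDerivAt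
    refine ((((hasDerivAt_id t).const_mul 2).mul hK).sub ((hasDerivAt_id t).mul hN) |>.add hJ
      |>.congr_deriv ?_)
    have hre := congrArg re (hode t)
    have him := congrArg im (hode t)
    simp only [add_re, mul_re, ofReal_re, ofReal_im, zero_mul, sub_zero, sub_re, one_re, I_re,
      I_im, mul_zero, sub_self, one_mul, sub_im, one_im, mul_im, zero_add, zero_sub, neg_mul,
      sub_neg_eq_add, zero_re, add_im, add_zero, zero_im, mul_one, RCLike.star_def, Pi.mul_apply,
      conj_im, mul_neg, conj_re, id_eq, Complex.sq_norm, normSq_apply, Complex.inner] at hre him ⊢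
    linear_combination 2 * ((w t).re * him - (w t).im * hre)
  have := is_const_of_deriv_eq_zero (fun t => (hP t).differentiableAt) (fun t => (hP t).deriv) x 0
  simp only [mul_zero, zero_mul, intervalIntegral.integral_same, sub_zero, add_zero] at this
  linarith

theorem mul_integral_sq_norm_pos (hw : ∀ x, HasDerivAt w (w' x) x) (hw0 : w 0 ≠ 0) {x : ℝ}
    (hx : x ≠ 0) : 0 < x * ∫ t in 0..x, ‖w t‖ ^ 2 := by
  have : Continuous w := continuous_iff_continuousAt.2 fun t => (hw t).continuousAt
  exact mul_integral_pos_of_continuous_of_nonneg (by fun_prop) (fun t => by positivity)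
    (pow_pos (norm_pos_iff.2 hw0) 2) hx

theorem ne_zero_of_ode (hw : ∀ x, HasDerivAt w (w' x) x) (hw' : ∀ x, HasDerivAt w' (w'' x) x)
    (hode : ∀ x : ℝ, x * w'' x + (1 - I * x) * w' x + a * w x = 0) (hw0 : w 0 ≠ 0) (x : ℝ) :
    w x ≠ 0 := by
  intro hx
  have hx0 : x ≠ 0 := by rintro rfl; exact hw0 hx
  have hJ := two_mul_im_mul_conj_eq_sub_integral hw hw' hode x
  have hpos := mul_integral_sq_norm_pos hw hw0 hx0
  rw [show (∫ t in 0..x, ‖w t‖ ^ 2) = 0 by simpa [hx] using hJ, mul_zero] at hpos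
  exact hpos.false

theorem one_sub_two_mul_im_div_pos (hw : ∀ x, HasDerivAt w (w' x) x)
    (hw' : ∀ x, HasDerivAt w' (w'' x) x)
    (hode : ∀ x : ℝ, x * w'' x + (1 - I * x) * w' x + a * w x = 0) (hw0 : w 0 ≠ 0) (x : ℝ) :
    0 < 1 - 2 * (w' x / w x).im := by
  rcases eq_or_ne x 0 with rfl | hx0
  · have : w' 0 / w 0 = -a := by
      rw [div_eq_iff hw0]
      linear_combination (by simpa using hode 0 : w' 0 + a * w 0 = 0)
    simp [this]
  have hne := ne_zero_of_ode hw hw' hode hw0 x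
  have hN : 0 < ‖w x‖ ^ 2 := by positivity
  have him : (w' x / w x).im = (w' x * conj (w x)).im / ‖w x‖ ^ 2 := by
    rw [← div_ofReal_im, ofReal_pow, ← mul_conj', mul_div_mul_right _ _ (by simpa using hne)]
  have hpos := mul_integral_sq_norm_pos hw hw0 hx0
  rw [show (∫ t in 0..x, ‖w t‖ ^ 2) = x * ‖w x‖ ^ 2 - 2 * x * (w' x * conj (w x)).im by
    linarith [two_mul_im_mul_conj_eq_sub_integral hw hw' hode x]] at hpos
  rw [him]
  have : 0 < x ^ 2 * ‖w x‖ ^ 2 * (1 - 2 * ((w' x * conj (w x)).im / ‖w x‖ ^ 2)) := by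
    field_simp
    nlinarith
  exact pos_of_mul_pos_right this (by positivity)

theorem strictMono_sub_two_mul_arg (hw : ∀ x, HasDerivAt w (w' x) x)
    (hw' : ∀ x, HasDerivAt w' (w'' x) x)
    (hode : ∀ x : ℝ, x * w'' x + (1 - I * x) * w' x + a * w x = 0) (hw0 : w 0 = 1)
    {y : ℝ → ℝ} (hy0 : y 0 = 0) (hy : Continuous y)
    (harg : ∀ x, w x = ‖w x‖ * exp (I * y x)) : StrictMono fun x => x - 2 * y x := by
  have hne := ne_zero_of_ode hw hw' hode (by simp [hw0])
  have hwc : Continuous w := continuous_iff_continuousAt.2 fun t => (hw t).continuousAt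
  have hcont : Continuous w' := continuous_iff_continuousAt.2 fun t => (hw' t).continuousAt
  set L := fun x => ∫ t in 0..x, w' t / w t
  have hL : ∀ x, HasDerivAt L (w' x / w x) x := fun x =>
    ((hcont.div hwc hne).integral_hasStrictDerivAt 0 x).hasDerivAt
  have hyL : y = fun x => (L x).im := by
    refine eq_of_continuous_of_exp_I_mul_eq hy
      (continuous_iff_continuousAt.2 fun x => (hL x).complex_im.continuousAt) (by simp [hy0, L])
      fun x => ?_
    have hwL : w x = exp (L x) := by simpa [hw0] using eq_mul_exp_integral_div hw hne hcont x
    have h := harg x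
    rw [hwL] at h
    exact mul_left_cancel₀ (by simpa [← hwL] using hne x)
      (h.symm.trans (exp_eq_norm_mul_exp_I_mul_im (L x)))
  subst hyL
  refine strictMono_of_deriv_pos fun x => ?_
  have hG : HasDerivAt (fun x => x - 2 * (L x).im) (1 - 2 * (w' x / w x).im) x :=
    (hasDerivAt_id' x).sub ((hL x).complex_im.const_mul 2)
  beta_reduce
  rw [hG.deriv]
  exact one_sub_two_mul_im_div_pos hw hw' hode (by simp [hw0]) x

end KummerPhase

theorem stmt14 (a : ℝ)
    -- y is the continuous determination of the argument of ₁F₁(ia;1;ix) with y(0)=0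
    (y : ℝ → ℝ) (hy0 : y 0 = 0) (hycont : Continuous y)
    (hyarg : ∀ x : ℝ, oneFone (Complex.I * a) (Complex.I * x) =
      (‖oneFone (Complex.I * a) (Complex.I * x)‖ : ℂ) *
        Complex.exp (Complex.I * (y x : ℂ))) :
    -- 𝔊(x) = x − 2·arg ₁F₁(ia; 1; ix) = x − 2y(x) is strictly increasing on ℝ
    StrictMono (fun x : ℝ => x - 2 * y x) := by
  set c := kummerCoeff (I * a)
  have hc : HasInfiniteRadius c := hasInfiniteRadius_kummerCoeff _
  have hode (x : ℝ) : x * realPowerSeries (derivCoeff (derivCoeff c)) x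
      + (1 - I * x) * realPowerSeries (derivCoeff c) x + a * realPowerSeries c x = 0 := by
    linear_combination realPowerSeries_kummer_ode hc (kummerCoeff_succ _) x
      + a * realPowerSeries c x * I_sq
  refine strictMono_sub_two_mul_arg hc.hasDerivAt hc.derivCoeff.hasDerivAt hode
    (by rw [realPowerSeries_zero]; exact kummerCoeff_zero _) hy0 hycont fun x => ?_
  simpa only [oneFone_I_mul] using hyarg x
end
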